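/- arXiv:2602.14463 — 9 statements merged into one kernel-verified Lean document; each statement's English description precedes it below -/
import Mathlib

section
/- Let T_1, T_2, ..., T_n be bounded linear operators on a complex Hilbert space H. Then ‖∑_{k=1}^n T_k‖² ≤ ‖∑_{k=1}^n T_k* T_k‖ + ω( (∑_{j=1}^n T_j*)(∑_{k=1}^n T_k) − ∑_{k=1}^n T_k* T_k ). -/
/-!
Put `S = ∑ Tₖ` and `A = ∑ Tₖ* Tₖ`. Since `‖Sx‖² = ⟨S*S x, x⟩`, the C*-type estimate
`‖S‖² ≤ ω(S*S)` holds, and `S*S = A + (S*S - A)`. The numerical radius is subadditive and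
dominated by the operator norm, so `ω(S*S) ≤ ‖A‖ + ω(S*S - A)`.
-/

open ContinuousLinearMap

/-- The numerical radius of a bounded linear operator on a complex Hilbert space:
`ω(T) = sup_{‖x‖ = 1} |⟨Tx, x⟩|`. -/
noncomputable def numRadius {H : Type*} [NormedAddCommGroup H] [InnerProductSpace ℂ H]
    (T : H →L[ℂ] H) : ℝ :=
  ⨆ x : {x : H // ‖x‖ = 1}, ‖(inner ℂ (T x) (x : H) : ℂ)‖

section NumRadius

variable {H : Type*} [NormedAddCommGroup H] [InnerProductSpace ℂ H]

lemma norm_inner_self_le_opNorm (T : H →L[ℂ] H) {x : H} (hx : ‖x‖ = 1) :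
    ‖(inner ℂ (T x) x : ℂ)‖ ≤ ‖T‖ :=
  calc ‖(inner ℂ (T x) x : ℂ)‖ ≤ ‖T x‖ * ‖x‖ := norm_inner_le_norm _ _
    _ ≤ ‖T‖ * ‖x‖ * ‖x‖ := by gcongr; exact T.le_opNorm x
    _ = ‖T‖ := by rw [hx, mul_one, mul_one]

lemma numRadius_le_opNorm (T : H →L[ℂ] H) : numRadius T ≤ ‖T‖ :=
  Real.iSup_le (fun x => norm_inner_self_le_opNorm T x.2) (norm_nonneg T)

lemma norm_inner_self_le_numRadius (T : H →L[ℂ] H) {x : H} (hx : ‖x‖ = 1) :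
    ‖(inner ℂ (T x) x : ℂ)‖ ≤ numRadius T :=
  le_ciSup (f := fun x : {x : H // ‖x‖ = 1} => ‖(inner ℂ (T x) (x : H) : ℂ)‖)
    ⟨‖T‖, Set.forall_mem_range.2 fun y => norm_inner_self_le_opNorm T y.2⟩ ⟨x, hx⟩

lemma numRadius_nonneg (T : H →L[ℂ] H) : 0 ≤ numRadius T :=
  Real.iSup_nonneg fun _ => norm_nonneg _

lemma numRadius_add_le (T U : H →L[ℂ] H) : numRadius (T + U) ≤ numRadius T + numRadius U :=
  Real.iSup_le
    (fun x => by
      rw [add_apply, inner_add_left]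
      exact (norm_add_le _ _).trans
        (add_le_add (norm_inner_self_le_numRadius T x.2) (norm_inner_self_le_numRadius U x.2)))
    (add_nonneg (numRadius_nonneg T) (numRadius_nonneg U))

lemma sq_opNorm_le_numRadius_adjoint_comp_self [CompleteSpace H] (S : H →L[ℂ] H) :
    ‖S‖ ^ 2 ≤ numRadius (adjoint S ∘L S) := by
  have hS : ‖S‖ ≤ √(numRadius (adjoint S ∘L S)) := by
    refine opNorm_le_of_unit_norm (Real.sqrt_nonneg _) fun x hx => ?_
    rw [apply_norm_eq_sqrt_inner_adjoint_left]
    exact Real.sqrt_le_sqrt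
      ((Complex.re_le_norm _).trans (norm_inner_self_le_numRadius _ hx))
  exact (Real.le_sqrt (norm_nonneg S) (numRadius_nonneg _)).1 hS

end NumRadius

theorem norm_sq_sum_le_norm_add_numRadius
    {H : Type*} [NormedAddCommGroup H] [InnerProductSpace ℂ H] [CompleteSpace H]
    (n : ℕ) (T : Fin n → H →L[ℂ] H) :
    ‖∑ k, T k‖ ^ 2 ≤
      ‖∑ k, adjoint (T k) ∘L T k‖ +
        numRadius ((∑ j, adjoint (T j)) ∘L (∑ k, T k) - ∑ k, adjoint (T k) ∘L T k) := by
  set S := ∑ k, T k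
  set A := ∑ k, adjoint (T k) ∘L T k
  have hadj : adjoint S = ∑ j, adjoint (T j) := map_sum _ _ _
  rw [← hadj]
  calc ‖S‖ ^ 2 ≤ numRadius (adjoint S ∘L S) := sq_opNorm_le_numRadius_adjoint_comp_self S
    _ = numRadius (A + (adjoint S ∘L S - A)) := by rw [add_sub_cancel]
    _ ≤ numRadius A + numRadius (adjoint S ∘L S - A) := numRadius_add_le _ _
    _ ≤ ‖A‖ + numRadius (adjoint S ∘L S - A) := by gcongr; exact numRadius_le_opNorm A
end

section
/- Let T_1 and T_2 be bounded linear operators on a complex Hilbert space H. Then ‖T_1 + T_2‖² ≤ ‖T_1* T_1 + T_2* T_2‖ + 2‖Re(T_1* T_2)‖. -/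
open ContinuousLinearMap

/-- The real part of an operator: `Re(T) = (T + T*)/2`. -/
noncomputable def reOp {H : Type*} [NormedAddCommGroup H] [InnerProductSpace ℂ H]
    [CompleteSpace H] (T : H →L[ℂ] H) : H →L[ℂ] H :=
  (2 : ℂ)⁻¹ • (T + adjoint T)

theorem norm_sq_add_le
    {H : Type*} [NormedAddCommGroup H] [InnerProductSpace ℂ H] [CompleteSpace H]
    (T₁ T₂ : H →L[ℂ] H) :
    ‖T₁ + T₂‖ ^ 2 ≤
      ‖adjoint T₁ ∘L T₁ + adjoint T₂ ∘L T₂‖ + 2 * ‖reOp (adjoint T₁ ∘L T₂)‖ := by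
  have h2 : (2 : ℂ) • reOp (adjoint T₁ ∘L T₂) = adjoint T₁ ∘L T₂ + adjoint T₂ ∘L T₁ := by
    rw [reOp, smul_smul]
    norm_num
  have hn : ‖adjoint T₁ ∘L T₂ + adjoint T₂ ∘L T₁‖ = 2 * ‖reOp (adjoint T₁ ∘L T₂)‖ := by
    rw [← h2, norm_smul]
    simp
  calc ‖T₁ + T₂‖ ^ 2 = ‖adjoint (T₁ + T₂) ∘L (T₁ + T₂)‖ := by
        rw [norm_adjoint_comp_self]; ring
    _ = ‖(adjoint T₁ ∘L T₁ + adjoint T₂ ∘L T₂) + (adjoint T₁ ∘L T₂ + adjoint T₂ ∘L T₁)‖ := by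
        congr 1
        ext x
        simp [add_comp, comp_add, map_add]
        abel
    _ ≤ ‖adjoint T₁ ∘L T₁ + adjoint T₂ ∘L T₂‖ + ‖adjoint T₁ ∘L T₂ + adjoint T₂ ∘L T₁‖ :=
        norm_add_le _ _
    _ = _ := by rw [hn]
end

section
/- Let T be a bounded linear operator on a complex Hilbert space H. Then ‖T‖² ≤ (1/2)‖T T* + T* T‖ + 2‖Im((Re T)(Im T))‖. -/
open ContinuousLinearMap

/-- The imaginary part of an operator: `Im(T) = (T - T*)/(2i)`. -/
noncomputable def imOp {H : Type*} [NormedAddCommGroup H] [InnerProductSpace ℂ H]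
    [CompleteSpace H] (T : H →L[ℂ] H) : H →L[ℂ] H :=
  (2 * Complex.I)⁻¹ • (T - adjoint T)

theorem norm_sq_le_half_norm_add_two_norm_im
    {H : Type*} [NormedAddCommGroup H] [InnerProductSpace ℂ H] [CompleteSpace H]
    (T : H →L[ℂ] H) :
    ‖T‖ ^ 2 ≤
      (1 / 2) * ‖T ∘L adjoint T + adjoint T ∘L T‖ + 2 * ‖imOp (reOp T ∘L imOp T)‖ := by
  have key : T ∘L adjoint T
      = (2:ℂ)⁻¹ • (T ∘L adjoint T + adjoint T ∘L T) + (2:ℂ) • imOp (reOp T ∘L imOp T) := by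
    simp only [imOp, reOp, adjoint_comp, map_add, map_sub, map_smulₛₗ,
      adjoint_adjoint, comp_add, add_comp, comp_sub, sub_comp, smul_comp, comp_smul,
      smul_add, smul_sub, smul_smul, mul_inv, Complex.inv_I, map_inv₀, map_mul, Complex.conj_I, map_ofNat]
    match_scalars <;> (ring_nf; simp [Complex.I_sq]) <;> ring
  calc ‖T‖ ^ 2 = ‖adjoint T‖ * ‖adjoint T‖ := by rw [adjoint.norm_map, sq]
  _ = ‖adjoint (adjoint T) ∘L adjoint T‖ := (norm_adjoint_comp_self _).symm
  _ = ‖T ∘L adjoint T‖ := by rw [adjoint_adjoint]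
  _ ≤ ‖(2:ℂ)⁻¹ • (T ∘L adjoint T + adjoint T ∘L T)‖ + ‖(2:ℂ) • imOp (reOp T ∘L imOp T)‖ := by
        conv_lhs => rw [key]
        exact norm_add_le _ _
  _ = (1 / 2) * ‖T ∘L adjoint T + adjoint T ∘L T‖ + 2 * ‖imOp (reOp T ∘L imOp T)‖ := by
        rw [norm_smul, norm_smul]
        norm_num
end

section
/- Let T_1 and T_2 be bounded linear operators on a complex Hilbert space H, and let θ be a real number. Then ‖T_1 + e^{iθ} T_2‖² ≤ ‖T_1* T_1 + e^{iθ} T_1* T_2‖ + ‖T_2* T_2 + e^{−iθ} T_2* T_1‖. -/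
open ContinuousLinearMap

theorem norm_sq_add_exp_smul_le
    {H : Type*} [NormedAddCommGroup H] [InnerProductSpace ℂ H] [CompleteSpace H]
    (T₁ T₂ : H →L[ℂ] H) (θ : ℝ) :
    ‖T₁ + Complex.exp (Complex.I * θ) • T₂‖ ^ 2 ≤
      ‖adjoint T₁ ∘L T₁ + Complex.exp (Complex.I * θ) • (adjoint T₁ ∘L T₂)‖ +
        ‖adjoint T₂ ∘L T₂ + Complex.exp (-(Complex.I * θ)) • (adjoint T₂ ∘L T₁)‖ := by
  set c : ℂ := Complex.exp (Complex.I * θ) with hc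
  have hconj : (starRingEnd ℂ) c = Complex.exp (-(Complex.I * θ)) := by
    rw [hc, ← Complex.exp_conj]
    congr 1
    simp [Complex.conj_ofReal]
  set S := T₁ + c • T₂ with hS
  have hcc : c * Complex.exp (-(Complex.I * θ)) = 1 := by
    rw [hc, ← Complex.exp_add]; simp
  have key : adjoint S ∘L S =
      (adjoint T₁ ∘L T₁ + c • (adjoint T₁ ∘L T₂)) +
      (adjoint T₂ ∘L T₂ + Complex.exp (-(Complex.I * θ)) • (adjoint T₂ ∘L T₁)) := by
    rw [hS, map_add, map_smulₛₗ]; rw [show (starRingEnd ℂ) c = Complex.exp (-(Complex.I * θ)) from hconj]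
    ext x
    simp only [add_comp, comp_add, smul_comp, comp_smul, add_apply, smul_apply, coe_comp',
      Function.comp_apply]
    rw [smul_add, smul_smul, hcc, one_smul]
    abel
  calc ‖S‖ ^ 2 = ‖adjoint S ∘L S‖ := by
        rw [norm_adjoint_comp_self, sq]
    _ ≤ _ := by rw [key]; exact norm_add_le _ _
end

section
/- Let T_1, T_2, ..., T_n be bounded linear operators on a complex Hilbert space H. Then ‖∑_{k=1}^n T_k‖² ≤ ‖ ∑_{k=1}^n T_k* T_k + (1/2)( (n−2) ∑_{k=1}^n T_k* T_k + (∑_{j=1}^n T_j*)(∑_{k=1}^n T_k) ) ‖. -/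
open ContinuousLinearMap
open scoped ComplexInnerProductSpace

theorem norm_sq_sum_le_norm_combination
    {H : Type*} [NormedAddCommGroup H] [InnerProductSpace ℂ H] [CompleteSpace H]
    (n : ℕ) (T : Fin n → H →L[ℂ] H) :
    ‖∑ k, T k‖ ^ 2 ≤
      ‖(∑ k, adjoint (T k) ∘L T k) +
        (2 : ℂ)⁻¹ • (((n : ℂ) - 2) • (∑ k, adjoint (T k) ∘L T k) +
          (∑ j, adjoint (T j)) ∘L (∑ k, T k))‖ := by
  set S : H →L[ℂ] H := ∑ k, T k with hS
  set A : H →L[ℂ] H := ∑ k, adjoint (T k) ∘L T k with hA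
  set Q : H →L[ℂ] H := A + (2 : ℂ)⁻¹ • (((n : ℂ) - 2) • A + (∑ j, adjoint (T j)) ∘L S)
    with hQ
  have key : ∀ x : H, ‖S x‖ ^ 2 ≤ ‖Q‖ * ‖x‖ ^ 2 := by
    intro x
    have hAx : ⟪x, A x⟫ = ((∑ k, ‖T k x‖ ^ 2 : ℝ) : ℂ) := by
      simp only [hA, ContinuousLinearMap.sum_apply, inner_sum, comp_apply,
        adjoint_inner_right, inner_self_eq_norm_sq_to_K]
      push_cast
      rfl
    have hSx : ⟪x, ((∑ j, adjoint (T j)) ∘L S) x⟫ = ((‖S x‖ ^ 2 : ℝ) : ℂ) := by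
      have : (∑ j, adjoint (T j)) = adjoint S := by
        simp [hS, map_sum]
      rw [this]
      simp [adjoint_inner_right, inner_self_eq_norm_sq_to_K]
    set a : ℝ := ∑ k, ‖T k x‖ ^ 2 with ha
    set b : ℝ := ‖S x‖ ^ 2 with hb
    have hre : Complex.re ⟪x, Q x⟫ = a + 2⁻¹ * (((n : ℝ) - 2) * a + b) := by
      simp only [hQ, ContinuousLinearMap.add_apply, inner_add_right,
        ContinuousLinearMap.smul_apply, inner_smul_right, hAx, hSx]
      simp only [← Complex.ofReal_pow, Complex.add_re, Complex.ofReal_re, Complex.mul_re,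
        Complex.sub_re, Complex.natCast_re, Complex.inv_re,
        Complex.sub_im, Complex.natCast_im, Complex.ofReal_im,
        Complex.add_im, Complex.mul_im, Complex.inv_im, Complex.normSq_ofNat,
        Complex.re_ofNat, Complex.im_ofNat]
      ring
    have hcs : b ≤ (n : ℝ) * a := by
      have h1 : ‖S x‖ ≤ ∑ k, ‖T k x‖ := by
        simpa [hS] using norm_sum_le Finset.univ (fun k => T k x)
      have h2 : (∑ k, ‖T k x‖) ^ 2 ≤ (n : ℝ) * a := by
        have := sq_sum_le_card_mul_sum_sq (s := (Finset.univ : Finset (Fin n)))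
          (f := fun k => ‖T k x‖)
        simpa [ha] using this
      calc b = ‖S x‖ ^ 2 := rfl
        _ ≤ (∑ k, ‖T k x‖) ^ 2 := by
            have := norm_nonneg (S x)
            nlinarith [h1]
        _ ≤ (n : ℝ) * a := h2
    have hb_le : b ≤ Complex.re ⟪x, Q x⟫ := by
      rw [hre]
      have hanonneg : 0 ≤ a := Finset.sum_nonneg fun k _ => sq_nonneg _
      nlinarith
    have hQnorm : Complex.re ⟪x, Q x⟫ ≤ ‖Q‖ * ‖x‖ ^ 2 := by
      calc Complex.re ⟪x, Q x⟫ ≤ ‖⟪x, Q x⟫‖ := Complex.re_le_norm _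
        _ ≤ ‖x‖ * ‖Q x‖ := norm_inner_le_norm _ _
        _ ≤ ‖x‖ * (‖Q‖ * ‖x‖) := by
            have := Q.le_opNorm x
            nlinarith [norm_nonneg x]
        _ = ‖Q‖ * ‖x‖ ^ 2 := by ring
    exact le_trans hb_le hQnorm
  have hQpos : (0 : ℝ) ≤ ‖Q‖ := norm_nonneg _
  have hS_le : ‖S‖ ≤ Real.sqrt ‖Q‖ := by
    apply S.opNorm_le_bound (Real.sqrt_nonneg _)
    intro x
    have h := key x
    have h2 : ‖S x‖ ^ 2 ≤ (Real.sqrt ‖Q‖ * ‖x‖) ^ 2 := by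
      rw [mul_pow, Real.sq_sqrt hQpos]
      exact h
    nlinarith [Real.sqrt_nonneg ‖Q‖, norm_nonneg x, norm_nonneg (S x),
      mul_nonneg (Real.sqrt_nonneg ‖Q‖) (norm_nonneg x)]
  calc ‖S‖ ^ 2 ≤ (Real.sqrt ‖Q‖) ^ 2 := by
        have := norm_nonneg S
        nlinarith
    _ = ‖Q‖ := Real.sq_sqrt hQpos
end

section
/- Let T_1, T_2, ..., T_n be bounded linear operators on a complex Hilbert space H, and let x ∈ H be a unit vector. Then ‖(∑_{k=1}^n T_k) x‖² ≤ ⟨ ( ∑_{k=1}^n T_k* T_k + (1/4) ∑_{1 ≤ k ≠ j ≤ n} (T_k + T_j)*(T_k + T_j) ) x, x ⟩. -/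
/-!
Put `y k = T k x`. The left side is `∑ k, ∑ j, re ⟪y k, y j⟫`, while the right side is
`∑ k, ‖y k‖ ^ 2 + ¼ ∑_{k ≠ j} ‖y k + y j‖ ^ 2`. The diagonal terms agree, and each
off-diagonal term obeys `4 re ⟪a, b⟫ = ‖a + b‖ ^ 2 - ‖a - b‖ ^ 2 ≤ ‖a + b‖ ^ 2`.
-/

open ContinuousLinearMap

section

open Finset RCLike

variable {E : Type*} [NormedAddCommGroup E]

section

variable {𝕜 : Type*} [RCLike 𝕜] [InnerProductSpace 𝕜 E]

theorem re_inner_le_norm_add_sq_div_four (a b : E) : re (inner 𝕜 a b) ≤ ‖a + b‖ ^ 2 / 4 := by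
  nlinarith [norm_add_sq (𝕜 := 𝕜) a b, norm_sub_sq (𝕜 := 𝕜) a b, sq_nonneg ‖a - b‖]

theorem norm_sum_sq_eq_sum_sum_re_inner {ι : Type*} [Fintype ι] (y : ι → E) :
    ‖∑ k, y k‖ ^ 2 = ∑ k, ∑ j, re (inner 𝕜 (y k) (y j)) := by
  simp only [← inner_self_eq_norm_sq (𝕜 := 𝕜), sum_inner, inner_sum, map_sum]
  exact sum_comm

end

theorem norm_sum_sq_le_sum_norm_sq_add_sum_norm_add_sq
    (𝕜 : Type*) [RCLike 𝕜] [InnerProductSpace 𝕜 E]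
    {ι : Type*} [Fintype ι] [DecidableEq ι] (y : ι → E) :
    ‖∑ k, y k‖ ^ 2 ≤ ∑ k, ‖y k‖ ^ 2 + 4⁻¹ * ∑ k, ∑ j ∈ univ.erase k, ‖y k + y j‖ ^ 2 := by
  rw [norm_sum_sq_eq_sum_sum_re_inner (𝕜 := 𝕜), mul_sum, ← sum_add_distrib]
  refine sum_le_sum fun k _ => ?_
  rw [← add_sum_erase _ _ (mem_univ k), mul_sum, inner_self_eq_norm_sq]
  gcongr with j
  linarith [re_inner_le_norm_add_sq_div_four (𝕜 := 𝕜) (y k) (y j)]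

end

theorem norm_sq_sum_apply_le_inner_general
    {H : Type*} [NormedAddCommGroup H] [InnerProductSpace ℂ H] [CompleteSpace H]
    (n : ℕ) (T : Fin n → H →L[ℂ] H) (x : H) :
    ‖(∑ k, T k) x‖ ^ 2 ≤
      ((inner ℂ
        (((∑ k, adjoint (T k) ∘L T k) +
          (4 : ℂ)⁻¹ • ∑ k, ∑ j ∈ Finset.univ.erase k,
            adjoint (T k + T j) ∘L (T k + T j)) x) x : ℂ)).re := by
  have hquarter : (starRingEnd ℂ) (4 : ℂ)⁻¹ = ((4⁻¹ : ℝ) : ℂ) := by simp [map_ofNat]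
  calc ‖(∑ k, T k) x‖ ^ 2 = ‖∑ k, T k x‖ ^ 2 := by rw [sum_apply]
    _ ≤ ∑ k, ‖T k x‖ ^ 2 + 4⁻¹ * ∑ k, ∑ j ∈ Finset.univ.erase k, ‖T k x + T j x‖ ^ 2 :=
      norm_sum_sq_le_sum_norm_sq_add_sum_norm_add_sq ℂ _
    _ = _ := by
      simp only [add_apply, smul_apply, sum_apply, inner_add_left, inner_smul_left, sum_inner,
        Complex.add_re, Complex.re_sum, hquarter, Complex.re_ofReal_mul]
      simp only [← RCLike.re_to_complex, ← apply_norm_sq_eq_inner_adjoint_left, add_apply]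

theorem norm_sq_sum_apply_le_inner
    {H : Type*} [NormedAddCommGroup H] [InnerProductSpace ℂ H] [CompleteSpace H]
    (n : ℕ) (T : Fin n → H →L[ℂ] H) (x : H) (hx : ‖x‖ = 1) :
    ‖(∑ k, T k) x‖ ^ 2 ≤
      ((inner ℂ
        (((∑ k, adjoint (T k) ∘L T k) +
          (4 : ℂ)⁻¹ • ∑ k, ∑ j ∈ Finset.univ.erase k,
            adjoint (T k + T j) ∘L (T k + T j)) x) x : ℂ)).re :=
  norm_sq_sum_apply_le_inner_general n T x
end

section
/- Let T_1, T_2, ..., T_n be bounded linear operators on a complex Hilbert space H. Then ‖∑_{k=1}^n T_k‖² ≤ ‖ ∑_{k=1}^n T_k* T_k + (1/4) ∑_{1 ≤ k ≠ j ≤ n} (T_k + T_j)*(T_k + T_j) ‖. -/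
open ContinuousLinearMap RCLike
open scoped InnerProductSpace

lemma aux_vec {H : Type*} [NormedAddCommGroup H] [InnerProductSpace ℂ H]
    (n : ℕ) (a : Fin n → H) :
    ‖∑ k, a k‖^2 ≤ ∑ k, ‖a k‖^2
      + (4:ℝ)⁻¹ * ∑ k, ∑ j ∈ Finset.univ.erase k, ‖a k + a j‖^2 := by
  have h1 : ‖∑ k, a k‖^2 = ∑ k, ∑ j, re (⟪a k, a j⟫_ℂ) := by
    rw [← inner_self_eq_norm_sq (𝕜 := ℂ), sum_inner]
    simp only [inner_sum, map_sum]
  have key : ∀ x y : H, re (⟪x, y⟫_ℂ) + (4:ℝ)⁻¹ * ‖x - y‖^2 = (4:ℝ)⁻¹ * ‖x + y‖^2 := by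
    intro x y
    have h1 := norm_add_sq (𝕜 := ℂ) x y
    have h2 := norm_sub_sq (𝕜 := ℂ) x y
    linarith
  have main : ‖∑ k, a k‖^2 + (4:ℝ)⁻¹ * ∑ k, ∑ j ∈ Finset.univ.erase k, ‖a k - a j‖^2
      = ∑ k, ‖a k‖^2 + (4:ℝ)⁻¹ * ∑ k, ∑ j ∈ Finset.univ.erase k, ‖a k + a j‖^2 := by
    rw [h1, Finset.mul_sum, Finset.mul_sum, ← Finset.sum_add_distrib, ← Finset.sum_add_distrib]
    refine Finset.sum_congr rfl fun k _ => ?_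
    rw [← Finset.add_sum_erase _ _ (Finset.mem_univ k), inner_self_eq_norm_sq,
      Finset.mul_sum, Finset.mul_sum]
    rw [add_assoc, ← Finset.sum_add_distrib]
    congr 1
    exact Finset.sum_congr rfl fun j _ => key (a k) (a j)
  have hnn : (0:ℝ) ≤ ∑ k, ∑ j ∈ Finset.univ.erase k, ‖a k - a j‖^2 := by positivity
  nlinarith [hnn]

theorem norm_sq_sum_le_norm_quarter_sum
    {H : Type*} [NormedAddCommGroup H] [InnerProductSpace ℂ H] [CompleteSpace H]
    (n : ℕ) (T : Fin n → H →L[ℂ] H) :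
    ‖∑ k, T k‖ ^ 2 ≤
      ‖(∑ k, adjoint (T k) ∘L T k) +
        (4 : ℂ)⁻¹ • ∑ k, ∑ j ∈ Finset.univ.erase k,
          adjoint (T k + T j) ∘L (T k + T j)‖ := by
  set A := (∑ k, adjoint (T k) ∘L T k) +
      (4 : ℂ)⁻¹ • ∑ k, ∑ j ∈ Finset.univ.erase k,
        adjoint (T k + T j) ∘L (T k + T j) with hA
  have hAnn : 0 ≤ ‖A‖ := norm_nonneg _
  have hbound : ∀ x : H, ‖(∑ k, T k) x‖^2 ≤ ‖A‖ * ‖x‖^2 := by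
    intro x
    have hterm : ∀ (U : H →L[ℂ] H), ⟪(adjoint U ∘L U) x, x⟫_ℂ = ((‖U x‖^2 : ℝ) : ℂ) := by
      intro U
      rw [comp_apply, adjoint_inner_left, inner_self_eq_norm_sq_to_K]; norm_cast
    have hc : ⟪A x, x⟫_ℂ = (((∑ k, ‖T k x‖^2
        + (4:ℝ)⁻¹ * ∑ k, ∑ j ∈ Finset.univ.erase k, ‖(T k + T j) x‖^2) : ℝ) : ℂ) := by
      rw [hA, add_apply, inner_add_left, smul_apply, inner_smul_left]
      simp only [sum_apply, sum_inner, hterm]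
      push_cast
      norm_num
      left
      simp [map_ofNat]
    have hAx : re (⟪A x, x⟫_ℂ) = ∑ k, ‖T k x‖^2
        + (4:ℝ)⁻¹ * ∑ k, ∑ j ∈ Finset.univ.erase k, ‖(T k + T j) x‖^2 := by
      rw [hc]; exact Complex.ofReal_re _
    have h1 : ‖(∑ k, T k) x‖^2 ≤ re (⟪A x, x⟫_ℂ) := by
      rw [hAx]
      have := aux_vec n (fun k => T k x)
      simpa using this
    have h2 : re (⟪A x, x⟫_ℂ) ≤ ‖A‖ * ‖x‖^2 := by
      calc re (⟪A x, x⟫_ℂ) ≤ ‖A x‖ * ‖x‖ := re_inner_le_norm _ _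
        _ ≤ (‖A‖ * ‖x‖) * ‖x‖ := by
            have := A.le_opNorm x
            nlinarith [norm_nonneg x]
        _ = ‖A‖ * ‖x‖^2 := by ring
    linarith
  have hop : ‖∑ k, T k‖ ≤ Real.sqrt ‖A‖ := by
    refine opNorm_le_bound _ (Real.sqrt_nonneg _) fun x => ?_
    have h : ‖(∑ k, T k) x‖^2 ≤ (Real.sqrt ‖A‖ * ‖x‖)^2 := by
      rw [mul_pow, Real.sq_sqrt hAnn]; exact hbound x
    have := Real.sqrt_le_sqrt h
    rwa [Real.sqrt_sq (norm_nonneg _), Real.sqrt_sq (by positivity)] at this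
  calc ‖∑ k, T k‖ ^ 2 ≤ (Real.sqrt ‖A‖) ^ 2 := by
        exact pow_le_pow_left₀ (norm_nonneg _) hop 2
    _ = ‖A‖ := Real.sq_sqrt hAnn
end

section
/- Let T_1 and T_2 be bounded linear operators on a complex Hilbert space H. Then ‖T_1 + T_2‖² ≤ ‖ T_1* T_1 + T_2* T_2 + (1/2)(T_1 + T_2)*(T_1 + T_2) ‖. -/
/-!
By the parallelogram law `a⋆a + b⋆b = ½ ((a + b)⋆(a + b) + (a - b)⋆(a - b))`, the element on the
right equals `(a + b)⋆(a + b) + ½ (a - b)⋆(a - b)`, which dominates `(a + b)⋆(a + b) ≥ 0`. The norm is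
monotone on positive elements of a C⋆-algebra, and `‖(a + b)⋆(a + b)‖ = ‖a + b‖²`.
-/

open ContinuousLinearMap

lemma star_mul_self_add_star_mul_self_add_half_eq {R A : Type*} [Field R] [CharZero R]
    [NonUnitalRing A] [StarRing A] [Module R A] (a b : A) :
    star a * a + star b * b + (2 : R)⁻¹ • (star (a + b) * (a + b)) =
      star (a + b) * (a + b) + (2 : R)⁻¹ • (star (a - b) * (a - b)) := by
  simp only [star_add, star_sub, add_mul, mul_add, sub_mul, mul_sub]
  module

open ComplexOrder in
lemma CStarAlgebra.norm_add_sq_le_norm_star_mul_self_add {A : Type*} [NonUnitalCStarAlgebra A]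
    [PartialOrder A] [StarOrderedRing A] (a b : A) :
    ‖a + b‖ ^ 2 ≤ ‖star a * a + star b * b + (2 : ℂ)⁻¹ • (star (a + b) * (a + b))‖ := by
  rw [sq, ← CStarRing.norm_star_mul_self, star_mul_self_add_star_mul_self_add_half_eq]
  refine norm_le_norm_of_nonneg_of_le (star_mul_self_nonneg _) (le_add_of_nonneg_right ?_)
  exact smul_nonneg (inv_nonneg.2 zero_le_two) (star_mul_self_nonneg _)

theorem norm_sq_add_le_norm_half
    {H : Type*} [NormedAddCommGroup H] [InnerProductSpace ℂ H] [CompleteSpace H]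
    (T₁ T₂ : H →L[ℂ] H) :
    ‖T₁ + T₂‖ ^ 2 ≤
      ‖adjoint T₁ ∘L T₁ + adjoint T₂ ∘L T₂ +
        (2 : ℂ)⁻¹ • (adjoint (T₁ + T₂) ∘L (T₁ + T₂))‖ := by
  simpa only [star_eq_adjoint, mul_def] using
    CStarAlgebra.norm_add_sq_le_norm_star_mul_self_add T₁ T₂
end

section
/- Let T_1 and T_2 be bounded linear operators on a complex Hilbert space H. Then ‖T_1 + T_2‖² ≤ ‖ (3/2)(T_1* T_1 + T_2* T_2) + Re(T_1* T_2) ‖. -/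
/-!
The operator on the right equals `|T₁ + T₂|² + ½ |T₁ - T₂|²`, so it dominates the positive
operator `|T₁ + T₂|²` in the Loewner order. The norm is monotone on positive elements of a
C⋆-algebra, and `‖|T₁ + T₂|²‖ = ‖T₁ + T₂‖²` by the C⋆-identity.
-/

open ContinuousLinearMap

theorem CStarRing.sq_norm_le_norm_star_mul_self_add {A : Type*} [CStarAlgebra A]
    [PartialOrder A] [StarOrderedRing A] (a : A) {b : A} (hb : 0 ≤ b) :
    ‖a‖ ^ 2 ≤ ‖star a * a + b‖ := by
  rw [sq, ← CStarRing.norm_star_mul_self]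
  exact CStarAlgebra.norm_le_norm_of_nonneg_of_le (star_mul_self_nonneg a)
    (le_add_of_nonneg_right hb)

theorem three_halves_smul_add_reOp_eq {H : Type*} [NormedAddCommGroup H]
    [InnerProductSpace ℂ H] [CompleteSpace H] (T₁ T₂ : H →L[ℂ] H) :
    ((3 : ℂ) / 2) • (adjoint T₁ ∘L T₁ + adjoint T₂ ∘L T₂) + reOp (adjoint T₁ ∘L T₂) =
      adjoint (T₁ + T₂) ∘L (T₁ + T₂) + (2 : ℝ)⁻¹ • (adjoint (T₁ - T₂) ∘L (T₁ - T₂)) := by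
  simp only [reOp, adjoint_comp, adjoint_adjoint, map_add, map_sub,
    add_comp, sub_comp, comp_add, comp_sub, smul_add, smul_sub]
  module

theorem norm_sq_add_le_norm_three_halves
    {H : Type*} [NormedAddCommGroup H] [InnerProductSpace ℂ H] [CompleteSpace H]
    (T₁ T₂ : H →L[ℂ] H) :
    ‖T₁ + T₂‖ ^ 2 ≤
      ‖((3 : ℂ) / 2) • (adjoint T₁ ∘L T₁ + adjoint T₂ ∘L T₂) +
        reOp (adjoint T₁ ∘L T₂)‖ := by
  rw [three_halves_smul_add_reOp_eq]
  exact CStarRing.sq_norm_le_norm_star_mul_self_add _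
    (smul_nonneg (by norm_num) (star_mul_self_nonneg _))
end
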